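/- (Infinitesimal similitude, externalized) With notation as above, let v̂ = (r−x)/‖r−x‖. Then the mixed partial ∂²G/∂d∂e(0,0) of the four-sided Biot–Savart sum equals the dipole direction field ‖r−x‖⁻³ • ( 3 ⟪v̂, a × b⟫ • v̂ − a × b ). -/

import Mathlib

open scoped RealInnerProductSpace

noncomputable def cross3 (a b : EuclideanSpace ℝ (Fin 3)) : EuclideanSpace ℝ (Fin 3) :=
  (WithLp.equiv 2 (Fin 3 → ℝ)).symm
    (crossProduct ((WithLp.equiv 2 (Fin 3 → ℝ)) a) ((WithLp.equiv 2 (Fin 3 → ℝ)) b))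

/-- Biot–Savart sum over the four sides of the parallelogram with vertices
`x`, `x + d • a`, `x + d • a + e • b`, `x + e • b`, evaluated at `r`. -/
noncomputable def bsPar (x a b r : EuclideanSpace ℝ (Fin 3)) (d e : ℝ) :
    EuclideanSpace ℝ (Fin 3) :=
  ‖r - x‖ ^ (-3 : ℤ) • cross3 (d • a) (r - x) +
    ‖r - x - d • a‖ ^ (-3 : ℤ) • cross3 (e • b) (r - x - d • a) -
    ‖r - x - e • b‖ ^ (-3 : ℤ) • cross3 (d • a) (r - x - e • b) -
    ‖r - x‖ ^ (-3 : ℤ) • cross3 (e • b) (r - x)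

/-! Write `K w = ‖w‖⁻³ • w` and `u = r - x`. Each Biot–Savart term is `c × K w`, so the four-sided
sum is `d • a × (K u - K (u - e • b)) + e • b × (K (u - d • a) - K u)`, whose mixed partial at the
origin is `a × DK_u b - b × DK_u a` with `DK_u v = ‖u‖⁻³ • v - 3 ‖u‖⁻⁵ ⟪u, v⟫ • u`. The identity
`⟪u, a⟫ • b × u - ⟪u, b⟫ • a × u = ⟪u, a × b⟫ • u - ‖u‖² • a × b` turns this into the dipole field. -/

section InverseSquareField

variable {E : Type*} [NormedAddCommGroup E] [InnerProductSpace ℝ E]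

theorem hasFDerivAt_norm_of_ne_zero {u : E} (hu : u ≠ 0) :
    HasFDerivAt (‖·‖) (‖u‖⁻¹ • innerSL ℝ u) u := by
  have hn : ‖u‖ ≠ 0 := norm_ne_zero_iff.mpr hu
  convert (hasStrictFDerivAt_norm_sq u).hasFDerivAt.sqrt (pow_ne_zero 2 hn) using 1
  · simp only [Real.sqrt_sq (norm_nonneg _)]
  · ext v
    simp only [smul_apply, coe_innerSL_apply, smul_eq_mul, Real.sqrt_sq (norm_nonneg _),
      nsmul_eq_mul, Nat.cast_ofNat]
    field_simp

theorem hasFDerivAt_norm_zpow_smul_self (n : ℤ) {u : E} (hu : u ≠ 0) :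
    HasFDerivAt (fun w : E => ‖w‖ ^ n • w)
      (‖u‖ ^ n • ContinuousLinearMap.id ℝ E + (n * ‖u‖ ^ (n - 2)) • (innerSL ℝ u).smulRight u)
      u := by
  have hn : ‖u‖ ≠ 0 := norm_ne_zero_iff.mpr hu
  have h := ((hasDerivAt_zpow n ‖u‖ (Or.inl hn)).comp_hasFDerivAt u
    (hasFDerivAt_norm_of_ne_zero hu)).smul (hasFDerivAt_id u)
  refine h.congr_fderiv ?_
  ext v
  simp only [FunLike.coe_add, FunLike.coe_smul, Pi.add_apply,
    Pi.smul_apply, ContinuousLinearMap.smulRight_apply, innerSL_apply_apply,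
    ContinuousLinearMap.id_apply, Function.comp_apply, id, smul_eq_mul, smul_smul]
  rw [show n - 1 = n - 2 + 1 by ring, zpow_add_one₀ hn]
  field_simp

noncomputable def inverseSquareField (w : E) : E :=
  ‖w‖ ^ (-3 : ℤ) • w

theorem hasDerivAt_inverseSquareField_sub_smul {u : E} (hu : u ≠ 0) (v : E) :
    HasDerivAt (fun t : ℝ => inverseSquareField (u - t • v))
      ((3 * ‖u‖ ^ (-5 : ℤ) * ⟪u, v⟫) • u - ‖u‖ ^ (-3 : ℤ) • v) 0 := by
  have hline : HasDerivAt (fun t : ℝ => u - t • v) (-v) 0 := by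
    simpa using ((hasDerivAt_id (0 : ℝ)).smul_const v).const_sub u
  refine ((hasFDerivAt_norm_zpow_smul_self (-3) hu).comp_hasDerivAt_of_eq 0 hline
    (by simp)).congr_deriv ?_
  simp only [FunLike.coe_add, FunLike.coe_smul, Pi.add_apply, Pi.smul_apply,
    ContinuousLinearMap.smulRight_apply, innerSL_apply_apply, ContinuousLinearMap.id_apply,
    inner_neg_right, smul_neg, smul_smul]
  norm_num
  module

end InverseSquareField

theorem deriv_deriv_smul_add_smul {F : Type*} [NormedAddCommGroup F] [NormedSpace ℝ F]
    {P Q : ℝ → F} {P' Q' : F} (hP : HasDerivAt P P' 0) (hQ : HasDerivAt Q Q' 0) :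
    deriv (fun d : ℝ => deriv (fun e : ℝ => d • P e + e • Q d) 0) 0 = P' + Q' := by
  have hinner (d : ℝ) : deriv (fun e : ℝ => d • P e + e • Q d) 0 = d • P' + Q d :=
    ((hP.const_smul d).add ((hasDerivAt_id 0).smul_const (Q d))).deriv.trans (by simp)
  simp only [hinner]
  exact (((hasDerivAt_id 0).smul_const P').add hQ).deriv.trans (by simp)

section Cross

local notation "E3" => EuclideanSpace ℝ (Fin 3)

theorem cross3_smul_left (s : ℝ) (a v : E3) : cross3 (s • a) v = s • cross3 a v := by
  simp [cross3]

theorem cross3_smul_right (s : ℝ) (a v : E3) : cross3 a (s • v) = s • cross3 a v := by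
  simp [cross3]

theorem cross3_sub_right (a v w : E3) : cross3 a (v - w) = cross3 a v - cross3 a w := by
  simp [cross3]

theorem cross3_neg_right (a v : E3) : cross3 a (-v) = -cross3 a v := by
  simpa using cross3_smul_right (-1) a v

theorem cross3_anticomm (a b : E3) : cross3 b a = -cross3 a b := by
  unfold cross3
  rw [← cross_anticomm]
  rfl

noncomputable def cross3CLM (a : E3) : E3 →L[ℝ] E3 :=
  LinearMap.toContinuousLinearMap
    { toFun := cross3 a
      map_add' := fun v w => by simp [cross3]
      map_smul' := fun s v => cross3_smul_right s a v }

theorem HasDerivAt.cross3_right {f : ℝ → E3} {f' : E3} {t : ℝ} (a : E3)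
    (hf : HasDerivAt f f' t) : HasDerivAt (fun s => cross3 a (f s)) (cross3 a f') t :=
  (cross3CLM a).hasFDerivAt.comp_hasDerivAt t hf

theorem inner_smul_cross3_sub_inner_smul_cross3 (u a b : E3) :
    ⟪u, a⟫ • cross3 b u - ⟪u, b⟫ • cross3 a u = ⟪u, cross3 a b⟫ • u - ⟪u, u⟫ • cross3 a b := by
  ext i
  fin_cases i <;>
    simp [cross3, crossProduct, PiLp.inner_apply, Fin.sum_univ_three,
      EuclideanSpace.real_norm_sq_eq] <;> ring

theorem bsPar_eq (x a b r : E3) (d e : ℝ) :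
    bsPar x a b r d e =
      d • cross3 a (inverseSquareField (r - x) - inverseSquareField (r - x - e • b)) +
        e • cross3 b (inverseSquareField (r - x - d • a) - inverseSquareField (r - x)) := by
  simp only [bsPar, inverseSquareField, cross3_smul_left, cross3_smul_right, cross3_sub_right]
  module

theorem cross3_sub_cross3_dipole (u a b : E3) (hu : u ≠ 0) :
    cross3 b ((3 * ‖u‖ ^ (-5 : ℤ) * ⟪u, a⟫) • u - ‖u‖ ^ (-3 : ℤ) • a) -
        cross3 a ((3 * ‖u‖ ^ (-5 : ℤ) * ⟪u, b⟫) • u - ‖u‖ ^ (-3 : ℤ) • b) =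
      ‖u‖ ^ (-3 : ℤ) • ((3 * ⟪‖u‖⁻¹ • u, cross3 a b⟫) • (‖u‖⁻¹ • u) - cross3 a b) := by
  have hn : ‖u‖ ≠ 0 := norm_ne_zero_iff.mpr hu
  calc _ = (3 * ‖u‖ ^ (-5 : ℤ)) • (⟪u, a⟫ • cross3 b u - ⟪u, b⟫ • cross3 a u) +
        (2 * ‖u‖ ^ (-3 : ℤ)) • cross3 a b := by
        simp only [cross3_sub_right, cross3_smul_right, cross3_anticomm b a]
        module
    _ = _ := by
      rw [inner_smul_cross3_sub_inner_smul_cross3, real_inner_self_eq_norm_sq,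
        real_inner_smul_left]
      match_scalars
      · field_simp
      · field_simp
        norm_cast

end Cross

theorem stmt13 (x a b r : EuclideanSpace ℝ (Fin 3)) (hrx : r ≠ x) :
    deriv (fun d : ℝ => deriv (fun e : ℝ => bsPar x a b r d e) 0) 0 =
      ‖r - x‖ ^ (-3 : ℤ) •
        ((3 * ⟪‖r - x‖⁻¹ • (r - x), cross3 a b⟫) • (‖r - x‖⁻¹ • (r - x)) -
          cross3 a b) := by
  have hu : r - x ≠ 0 := sub_ne_zero.mpr hrx
  have hP := ((hasDerivAt_inverseSquareField_sub_smul hu b).const_sub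
    (inverseSquareField (r - x))).cross3_right a
  have hQ := ((hasDerivAt_inverseSquareField_sub_smul hu a).sub_const
    (inverseSquareField (r - x))).cross3_right b
  simp only [bsPar_eq]
  rw [deriv_deriv_smul_add_smul hP hQ, ← cross3_sub_cross3_dipole _ _ _ hu, cross3_neg_right,
    neg_add_eq_sub]
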